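/- arXiv:1709.02117 — 6 statements merged into one kernel-verified Lean document; each statement's English description precedes it below -/
import Mathlib

section
/- Let F : I → (0,+∞] be a lower semicontinuous function on a nonempty open interval I ⊂ ℝ with F(s) < +∞ for almost every s. Then 1/F is locally bounded on I, and if G denotes an antiderivative of 1/F then φ := G⁻¹, defined on the interval J := G(I), is a surjective, strictly increasing, absolutely continuous function from J onto I satisfying φ'(t) = F(φ(t)) for almost every t ∈ J. -/
/-!
On a compact subinterval of `I` the lower semicontinuous function `F` attains a positive minimum,
so `g = 1/F` is bounded there and `G` is locally Lipschitz on `I`; as `g > 0` a.e., `G` is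
strictly increasing. By Lebesgue's differentiation theorem `G' = g` a.e. on `I`, and since
locally Lipschitz maps send null sets to null sets, `G` is differentiable with `G' = g > 0` at
`φ t` for a.e. `t ∈ G(I)`; there the inverse function theorem gives `φ' t = 1 / g (φ t) = F (φ t)`.
The same Lusin property lets one apply the change of variables `t = G u` on `[x, y]` minus a
null set, which yields `φ (G y) - φ (G x) = ∫ g u * F u du = y - x`.
-/

open Set Function MeasureTheory ENNReal NNReal Filter Topology

theorem IsOpen.exists_Icc_subset_of_mem {s : Set ℝ} (hs : IsOpen s) {x : ℝ} (hx : x ∈ s) :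
    ∃ a b, a < x ∧ x < b ∧ Icc a b ⊆ s := by
  obtain ⟨l, u, ⟨hl, hu⟩, hlu⟩ := (mem_nhds_iff_exists_Ioo_subset.1 (hs.mem_nhds hx))
  obtain ⟨a, hla, hax⟩ := exists_between hl
  obtain ⟨b, hxb, hbu⟩ := exists_between hu
  exact ⟨a, b, hax, hxb, (Icc_subset_Ioo hla hbu).trans hlu⟩

theorem LowerSemicontinuousOn.bddAbove_inv_toReal_image {α : Type*} [TopologicalSpace α]
    {F : α → ℝ≥0∞} {s K : Set α} (hF : LowerSemicontinuousOn F s) (hpos : ∀ x ∈ s, 0 < F x)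
    (hK : IsCompact K) (hKs : K ⊆ s) : BddAbove ((fun x => ((F x)⁻¹).toReal) '' K) := by
  rcases K.eq_empty_or_nonempty with rfl | hne
  · simp
  obtain ⟨a, ha, hmin⟩ := (hF.mono hKs).exists_isMinOn hne hK
  refine ⟨((F a)⁻¹).toReal, ?_⟩
  rintro _ ⟨x, hx, rfl⟩
  exact toReal_mono (inv_ne_top.2 (hpos a (hKs ha)).ne') (ENNReal.inv_le_inv.2 (hmin hx))

theorem LocallyLipschitzOn.hausdorffMeasure_image_null {X Y : Type*} [EMetricSpace X]
    [MeasurableSpace X] [BorelSpace X] [SecondCountableTopology X] [EMetricSpace Y]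
    [MeasurableSpace Y] [BorelSpace Y] {f : X → Y} {s : Set X} (hf : LocallyLipschitzOn s f)
    {d : ℝ} (hd : 0 ≤ d) (hs : μH[d] s = 0) : μH[d] (f '' s) = 0 := by
  have hf' : ∀ x ∈ s, ∃ K, ∃ t ∈ 𝓝[s] x, LipschitzOnWith K f t := fun x hx => hf hx
  choose! K t ht hK using hf'
  obtain ⟨c, hcs, hc, hcover⟩ := TopologicalSpace.countable_cover_nhdsWithin
    (f := fun x => t x ∩ s) fun x hx => inter_mem (ht x hx) self_mem_nhdsWithin
  refine measure_mono_null ((image_mono hcover).trans ((image_iUnion₂ _ _).subset))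
    ((measure_biUnion_null_iff hc).2 fun x hx => ?_)
  refine le_antisymm ?_ zero_le
  calc μH[d] (f '' (t x ∩ s)) ≤ K x ^ d * μH[d] (t x ∩ s) :=
        ((hK x (hcs hx)).mono inter_subset_left).hausdorffMeasure_image_le hd
    _ = 0 := by rw [measure_mono_null inter_subset_right hs, mul_zero]

theorem LocallyLipschitzOn.volume_image_null {f : ℝ → ℝ} {s : Set ℝ} (hf : LocallyLipschitzOn s f)
    (hs : volume s = 0) : volume (f '' s) = 0 := by
  rw [← hausdorffMeasure_real] at hs ⊢
  exact hf.hausdorffMeasure_image_null zero_le_one hs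

theorem StrictMonoOn.image_mem_nhds_of_continuousOn {f : ℝ → ℝ} {s : Set ℝ}
    (hf : StrictMonoOn f s) (hfc : ContinuousOn f s) (hs : IsOpen s) {x : ℝ} (hx : x ∈ s) :
    f '' s ∈ 𝓝 (f x) := by
  obtain ⟨a, b, hax, hxb, hab⟩ := hs.exists_Icc_subset_of_mem hx
  have hIcc : f '' Icc a b = Icc (f a) (f b) :=
    (hfc.mono hab).image_Icc_of_monotoneOn (hax.trans hxb).le (hf.monotoneOn.mono hab)
  refine mem_of_superset ?_ (image_mono hab)
  rw [hIcc]
  exact Icc_mem_nhds (hf (hab (left_mem_Icc.2 (hax.trans hxb).le)) hx hax)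
    (hf hx (hab (right_mem_Icc.2 (hax.trans hxb).le)) hxb)

theorem StrictMonoOn.strictMonoOn_invFunOn {α β : Type*} [LinearOrder α] [Nonempty α] [Preorder β]
    {f : α → β} {s : Set α} (hf : StrictMonoOn f s) : StrictMonoOn (invFunOn f s) (f '' s) := by
  rintro _ ⟨x, hx, rfl⟩ _ ⟨y, hy, rfl⟩ hxy
  rw [hf.injOn.leftInvOn_invFunOn hx, hf.injOn.leftInvOn_invFunOn hy]
  exact (hf.lt_iff_lt hx hy).1 hxy

theorem StrictMonoOn.hasDerivAt_invFunOn {f : ℝ → ℝ} {s : Set ℝ} (hf : StrictMonoOn f s)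
    (hfc : ContinuousOn f s) (hs : IsOpen s) {x f' : ℝ} (hx : x ∈ s) (hder : HasDerivAt f f' x)
    (hf' : f' ≠ 0) : HasDerivAt (invFunOn f s) f'⁻¹ (f x) := by
  have hleft := hf.injOn.leftInvOn_invFunOn hx
  have himage := hf.image_mem_nhds_of_continuousOn hfc hs hx
  refine HasDerivAt.of_local_left_inverse ?_ (hleft.symm ▸ hder) hf' ?_
  · refine hf.strictMonoOn_invFunOn.continuousAt_of_image_mem_nhds himage ?_
    rw [hf.injOn.invFunOn_image subset_rfl, hleft]
    exact hs.mem_nhds hx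
  · filter_upwards [himage] with y hy
    exact invFunOn_eq (by simpa using hy)

theorem Measurable.integrableOn_of_bddAbove {α : Type*} [MeasurableSpace α] {μ : Measure α}
    {g : α → ℝ} {s : Set α} (hg : Measurable g) (hg0 : 0 ≤ g) (hs : MeasurableSet s)
    (hμs : μ s ≠ ∞) (hb : BddAbove (g '' s)) : IntegrableOn g s μ := by
  obtain ⟨C, hC⟩ := hb
  refine Measure.integrableOn_of_bounded hμs hg.aestronglyMeasurable (M := C) ?_
  filter_upwards [ae_restrict_mem hs] with x hx
  rw [Real.norm_of_nonneg (hg0 x)]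
  exact hC (mem_image_of_mem g hx)

theorem Measurable.intervalIntegrable_of_bddAbove {g : ℝ → ℝ} (hg : Measurable g) (hg0 : 0 ≤ g)
    {a b : ℝ} (hb : BddAbove (g '' uIcc a b)) : IntervalIntegrable g volume a b :=
  (hg.integrableOn_of_bddAbove hg0 measurableSet_uIcc measure_Icc_lt_top.ne hb).intervalIntegrable

def IsPrimitiveOn (g G : ℝ → ℝ) (I : Set ℝ) : Prop :=
  ∀ a ∈ I, ∀ b ∈ I, G b - G a = ∫ x in a..b, g x

namespace IsPrimitiveOn

variable {I : Set ℝ} {g G : ℝ → ℝ}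

theorem lipschitzOnWith_Icc (hG : IsPrimitiveOn g G I) {a b : ℝ} {C : ℝ≥0}
    (hab : Icc a b ⊆ I) (hC : ∀ u ∈ Icc a b, ‖g u‖ ≤ C) : LipschitzOnWith C G (Icc a b) := by
  refine LipschitzOnWith.of_dist_le_mul fun u hu v hv => ?_
  rw [Real.dist_eq, Real.dist_eq, ← Real.norm_eq_abs, hG v (hab hv) u (hab hu)]
  exact intervalIntegral.norm_integral_le_of_norm_le_const fun x hx =>
    hC x (ordConnected_Icc.uIcc_subset hv hu (uIoc_subset_uIcc hx))

theorem locallyLipschitzOn (hG : IsPrimitiveOn g G I) (hI : IsOpen I) (hg0 : 0 ≤ g)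
    (hgb : ∀ a b, Icc a b ⊆ I → BddAbove (g '' Icc a b)) : LocallyLipschitzOn I G := by
  intro x hx
  obtain ⟨a, b, hax, hxb, hab⟩ := hI.exists_Icc_subset_of_mem hx
  obtain ⟨C, hC⟩ := hgb a b hab
  refine ⟨C.toNNReal, Icc a b, mem_nhdsWithin_of_mem_nhds (Icc_mem_nhds hax hxb),
    hG.lipschitzOnWith_Icc hab fun u hu => ?_⟩
  rw [Real.norm_of_nonneg (hg0 u)]
  exact (hC (mem_image_of_mem g hu)).trans (Real.le_coe_toNNReal C)

theorem monotoneOn (hG : IsPrimitiveOn g G I) (hg0 : 0 ≤ g) : MonotoneOn G I :=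
  fun x hx y hy hxy => sub_nonneg.1 <|
    (hG x hx y hy).symm ▸ intervalIntegral.integral_nonneg hxy fun u _ => hg0 u

theorem strictMonoOn (hG : IsPrimitiveOn g G I) (hIc : I.OrdConnected) (hg : Measurable g)
    (hg0 : 0 ≤ g) (hgb : ∀ a b, Icc a b ⊆ I → BddAbove (g '' Icc a b))
    (hpos : ∀ᵐ x, x ∈ I → 0 < g x) : StrictMonoOn G I := by
  intro x hx y hy hxy
  have hint : IntervalIntegrable g volume x y :=
    hg.intervalIntegrable_of_bddAbove hg0 (hgb _ _ (hIc.uIcc_subset hx hy))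
  have hsupp : volume (Ioo x y) ≤ volume (support g ∩ Ioc x y) := by
    refine measure_mono_ae ?_
    filter_upwards [hpos] with u hu hmem
    exact ⟨(hu (hIc.out hx hy (Ioo_subset_Icc_self hmem))).ne', Ioo_subset_Ioc_self hmem⟩
  have : 0 < ∫ u in x..y, g u :=
    (intervalIntegral.integral_pos_iff_support_of_nonneg_ae (.of_forall hg0) hint).2
      ⟨hxy, ((Measure.measure_Ioo_pos _).2 hxy).trans_le hsupp⟩
  linarith [hG x hx y hy]

theorem ae_hasDerivAt (hG : IsPrimitiveOn g G I) (hI : IsOpen I) (hg : Measurable g)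
    (hg0 : 0 ≤ g) (hgb : ∀ a b, Icc a b ⊆ I → BddAbove (g '' Icc a b)) :
    ∀ᵐ x, x ∈ I → HasDerivAt G (g x) x := by
  rw [ae_iff]
  refine measure_null_of_locally_null _ fun x hx => ?_
  obtain ⟨a, b, hax, hxb, hab⟩ := hI.exists_Icc_subset_of_mem (Classical.not_imp.1 hx).1
  rw [← uIcc_of_le (hax.trans hxb).le] at hab
  have hint : IntervalIntegrable g volume a b := hg.intervalIntegrable_of_bddAbove hg0 (hgb _ _ hab)
  refine ⟨_, inter_mem_nhdsWithin _ (Ioo_mem_nhds hax hxb),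
    measure_mono_null ?_ (ae_iff.1 hint.ae_hasDerivAt_integral)⟩
  rintro y ⟨hy, hyab⟩ hFTC
  have hIoo : Ioo a b ⊆ uIcc a b := Ioo_subset_Icc_self.trans Icc_subset_uIcc
  refine (Classical.not_imp.1 hy).2 ((hFTC (hIoo hyab) a left_mem_uIcc).const_add (G a)
    |>.congr_of_eventuallyEq ?_)
  filter_upwards [Ioo_mem_nhds hyab.1 hyab.2] with z hz
  linarith [hG a (hab left_mem_uIcc) z (hab (hIoo hz))]

theorem integral_eq_integral_deriv_mul_comp (hG : IsPrimitiveOn g G I) (hI : IsOpen I)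
    (hIc : I.OrdConnected) (hg : Measurable g) (hg0 : 0 ≤ g)
    (hgb : ∀ a b, Icc a b ⊆ I → BddAbove (g '' Icc a b))
    {x y : ℝ} (hx : x ∈ I) (hy : y ∈ I) (hxy : x ≤ y) (h : ℝ → ℝ) :
    ∫ t in G x..G y, h t = ∫ u in x..y, g u * h (G u) := by
  have hxyI : Icc x y ⊆ I := hIc.out hx hy
  have hmono := hG.monotoneOn hg0
  have hlip := hG.locallyLipschitzOn hI hg0 hgb
  set N := toMeasurable volume {u | ¬(u ∈ I → HasDerivAt G (g u) u)}
  have hN : volume N = 0 := by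
    rw [measure_toMeasurable]; exact ae_iff.1 (hG.ae_hasDerivAt hI hg hg0 hgb)
  set s := Icc x y \ N
  have hs : MeasurableSet s := measurableSet_Icc.diff (measurableSet_toMeasurable _ _)
  have hder : ∀ u ∈ s, HasDerivWithinAt G (g u) s u := fun u hu => by
    by_contra hnot
    exact hu.2 (subset_toMeasurable _ _ fun hD => hnot (hD (hxyI hu.1)).hasDerivWithinAt)
  have himage : G '' s =ᵐ[volume] Icc (G x) (G y) := by
    rw [← (hlip.continuousOn.mono hxyI).image_Icc_of_monotoneOn hxy (hmono.mono hxyI),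
      ← sdiff_union_inter (Icc x y) N, image_union]
    refine (union_ae_eq_left_of_ae_eq_empty (ae_eq_empty.2 ?_)).symm
    exact (hlip.mono (inter_subset_left.trans hxyI)).volume_image_null
      (measure_mono_null inter_subset_right hN)
  calc ∫ t in G x..G y, h t = ∫ t in Icc (G x) (G y), h t := by
        rw [intervalIntegral.integral_of_le (hmono hx hy hxy), integral_Icc_eq_integral_Ioc]
    _ = ∫ t in G '' s, h t := setIntegral_congr_set himage.symm
    _ = ∫ u in s, g u • h (G u) := integral_image_eq_integral_deriv_smul_of_monotoneOn hs hder
        (hmono.mono (sdiff_subset.trans hxyI)) h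
    _ = ∫ u in x..y, g u * h (G u) := by
        rw [setIntegral_congr_set (sdiff_null_ae_eq_self hN), integral_Icc_eq_integral_Ioc,
          ← intervalIntegral.integral_of_le hxy]
        rfl

theorem ae_hasDerivAt_invFunOn (hG : IsPrimitiveOn g G I) (hI : IsOpen I) (hIc : I.OrdConnected)
    (hg : Measurable g) (hg0 : 0 ≤ g) (hgb : ∀ a b, Icc a b ⊆ I → BddAbove (g '' Icc a b))
    (hpos : ∀ᵐ x, x ∈ I → 0 < g x) :
    ∀ᵐ t, t ∈ G '' I → HasDerivAt (invFunOn G I) (g (invFunOn G I t))⁻¹ t := by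
  have hGs := hG.strictMonoOn hIc hg hg0 hgb hpos
  set B := {x | x ∈ I ∧ ¬(HasDerivAt G (g x) x ∧ 0 < g x)}
  have hB : volume B = 0 := by
    refine measure_eq_zero_iff_ae_notMem.2 ?_
    filter_upwards [hG.ae_hasDerivAt hI hg hg0 hgb, hpos] with x hD hp ⟨hx, hbad⟩
    exact hbad ⟨hD hx, hp hx⟩
  have hGB : volume (G '' B) = 0 :=
    ((hG.locallyLipschitzOn hI hg0 hgb).mono fun x hx => hx.1).volume_image_null hB
  filter_upwards [measure_eq_zero_iff_ae_notMem.1 hGB] with t ht ⟨x, hx, hxt⟩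
  subst hxt
  have hgood : HasDerivAt G (g x) x ∧ 0 < g x := by
    by_contra hbad
    exact ht ⟨x, ⟨hx, hbad⟩, rfl⟩
  rw [hGs.injOn.leftInvOn_invFunOn hx]
  exact hGs.hasDerivAt_invFunOn (hG.locallyLipschitzOn hI hg0 hgb).continuousOn hI hx hgood.1
    hgood.2.ne'

theorem sub_invFunOn_eq_integral (hG : IsPrimitiveOn g G I) (hI : IsOpen I) (hIc : I.OrdConnected)
    (hg : Measurable g) (hg0 : 0 ≤ g) (hgb : ∀ a b, Icc a b ⊆ I → BddAbove (g '' Icc a b))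
    (hpos : ∀ᵐ x, x ∈ I → 0 < g x) {a b : ℝ} (ha : a ∈ G '' I) (hb : b ∈ G '' I) (hab : a ≤ b) :
    invFunOn G I b - invFunOn G I a = ∫ t in a..b, (g (invFunOn G I t))⁻¹ := by
  have hGs := hG.strictMonoOn hIc hg hg0 hgb hpos
  obtain ⟨x, hx, rfl⟩ := ha
  obtain ⟨y, hy, rfl⟩ := hb
  have hxy : x ≤ y := (hGs.le_iff_le hx hy).1 hab
  rw [hG.integral_eq_integral_deriv_mul_comp hI hIc hg hg0 hgb hx hy hxy,
    hGs.injOn.leftInvOn_invFunOn hx, hGs.injOn.leftInvOn_invFunOn hy]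
  have hone : ∀ᵐ u, u ∈ uIoc x y → g u * (g (invFunOn G I (G u)))⁻¹ = 1 := by
    filter_upwards [hpos] with u hu hmem
    have huI : u ∈ I := hIc.uIcc_subset hx hy (uIoc_subset_uIcc hmem)
    rw [hGs.injOn.leftInvOn_invFunOn huI, mul_inv_cancel₀ (hu huI).ne']
  rw [intervalIntegral.integral_congr_ae hone, intervalIntegral.integral_const, smul_eq_mul,
    mul_one]

end IsPrimitiveOn

theorem stmt1_general (I : Set ℝ) (hIopen : IsOpen I)
    (hIconn : I.OrdConnected)
    (F : ℝ → ℝ≥0∞) (hFmeas : Measurable F)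
    (hpos : ∀ x ∈ I, 0 < F x)
    (hlsc : LowerSemicontinuousOn F I)
    (hfin : ∀ᵐ x ∂(volume : Measure ℝ), x ∈ I → F x ≠ ⊤)
    (G : ℝ → ℝ)
    (hG : ∀ a ∈ I, ∀ b ∈ I, G b - G a = ∫ x in a..b, ((F x)⁻¹).toReal) :
    -- `1/F` is locally bounded on `I`
    (∀ x ∈ I, ∃ U ∈ nhds x, BddAbove ((fun y => ((F y)⁻¹).toReal) '' (U ∩ I))) ∧
    -- `φ := G⁻¹ : J = G(I) → I` is surjective, strictly increasing,
    -- absolutely continuous, and solves `φ' = F ∘ φ` a.e. on `J`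
    ∃ φ : ℝ → ℝ,
      (∀ x ∈ I, φ (G x) = x) ∧
      φ '' (G '' I) = I ∧
      StrictMonoOn φ (G '' I) ∧
      (∀ a ∈ G '' I, ∀ b ∈ G '' I, a ≤ b →
        φ b - φ a = ∫ t in a..b, (F (φ t)).toReal) ∧
      (∀ᵐ t ∂(volume : Measure ℝ), t ∈ G '' I → HasDerivAt φ ((F (φ t)).toReal) t) := by
  set g : ℝ → ℝ := fun x => ((F x)⁻¹).toReal
  have hG : IsPrimitiveOn g G I := hG
  have hg : Measurable g := hFmeas.inv.ennreal_toReal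
  have hg0 : 0 ≤ g := fun _ => toReal_nonneg
  have hgb : ∀ a b, Icc a b ⊆ I → BddAbove (g '' Icc a b) := fun a b hab =>
    hlsc.bddAbove_inv_toReal_image hpos isCompact_Icc hab
  have hgpos : ∀ᵐ x, x ∈ I → 0 < g x := by
    filter_upwards [hfin] with x hx hxI
    exact toReal_pos (ENNReal.inv_ne_zero.2 (hx hxI)) (inv_ne_top.2 (hpos x hxI).ne')
  have hginv : ∀ x, (g x)⁻¹ = (F x).toReal := fun x => by simp [g, toReal_inv]
  have hGs := hG.strictMonoOn hIconn hg hg0 hgb hgpos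
  refine ⟨fun x hx => ?_, invFunOn G I, fun x hx => hGs.injOn.leftInvOn_invFunOn hx,
    hGs.injOn.invFunOn_image subset_rfl, hGs.strictMonoOn_invFunOn,
    fun a ha b hb hab => ?_, ?_⟩
  · obtain ⟨a, b, hax, hxb, hab⟩ := hIopen.exists_Icc_subset_of_mem hx
    exact ⟨Icc a b, Icc_mem_nhds hax hxb, (hgb a b hab).mono (image_mono inter_subset_left)⟩
  · simpa only [hginv] using hG.sub_invFunOn_eq_integral hIopen hIconn hg hg0 hgb hgpos ha hb hab
  · simpa only [hginv] using hG.ae_hasDerivAt_invFunOn hIopen hIconn hg hg0 hgb hgpos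

/-- Existence of an absolutely continuous solution of the autonomous ODE
`φ' = F ∘ φ` for a l.s.c. weight `F : I → (0,+∞]` which is finite a.e.,
obtained as `φ = G⁻¹` where `G` is an antiderivative of `1/F`. -/
theorem stmt1 (I : Set ℝ) (hIopen : IsOpen I) (hIne : I.Nonempty)
    (hIconn : I.OrdConnected)
    (F : ℝ → ℝ≥0∞) (hFmeas : Measurable F)
    (hpos : ∀ x ∈ I, 0 < F x)
    (hlsc : LowerSemicontinuousOn F I)
    (hfin : ∀ᵐ x ∂(volume : Measure ℝ), x ∈ I → F x ≠ ⊤)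
    (G : ℝ → ℝ)
    (hG : ∀ a ∈ I, ∀ b ∈ I, G b - G a = ∫ x in a..b, ((F x)⁻¹).toReal) :
    -- `1/F` is locally bounded on `I`
    (∀ x ∈ I, ∃ U ∈ nhds x, BddAbove ((fun y => ((F y)⁻¹).toReal) '' (U ∩ I))) ∧
    -- `φ := G⁻¹ : J = G(I) → I` is surjective, strictly increasing,
    -- absolutely continuous, and solves `φ' = F ∘ φ` a.e. on `J`
    ∃ φ : ℝ → ℝ,
      (∀ x ∈ I, φ (G x) = x) ∧
      φ '' (G '' I) = I ∧
      StrictMonoOn φ (G '' I) ∧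
      (∀ a ∈ G '' I, ∀ b ∈ G '' I, a ≤ b →
        φ b - φ a = ∫ t in a..b, (F (φ t)).toReal) ∧
      (∀ᵐ t ∂(volume : Measure ℝ), t ∈ G '' I → HasDerivAt φ ((F (φ t)).toReal) t) :=
  stmt1_general I hIopen hIconn F hFmeas hpos hlsc hfin G hG
end

section
/- Let F : I → (0,+∞] be lower semicontinuous on a nonempty open interval I and finite almost everywhere, G an antiderivative of 1/F, and φ = G⁻¹ on J = G(I). Then for all a ≤ b in J, ∫_a^b F(φ(t)) dt = φ(b) − φ(a); in particular F∘φ is locally integrable on J. -/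
open Set MeasureTheory ENNReal

/-! Since `G` has the left inverse `φ` it is injective; as its increments are integrals of the
nonnegative function `1/F`, it is therefore strictly increasing, `1/F` is integrable between any
two points of `I`, and `G` is continuous there. The substitution `t = G x` then becomes a statement
about measures: for `α ≤ β` in `I`, `φ` pushes Lebesgue measure on `(G α, G β]` forward to
`(1/F) dx` on `(α, β]`, both giving `Iic c` the mass `G c - G α`. Integrating `F` against the
latter yields `∫ F/F = β - α`, because `F` is positive and a.e. finite on `I`. -/

section LeftInverse

variable {G φ : ℝ → ℝ} {α β : ℝ}

lemma monotoneOn_image_of_leftInvOn (hGmono : StrictMonoOn G (Icc α β))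
    (hφ : LeftInvOn φ G (Icc α β)) : MonotoneOn φ (G '' Icc α β) := by
  rintro _ ⟨x, hx, rfl⟩ _ ⟨y, hy, rfl⟩ hxy
  rw [hφ hx, hφ hy]
  exact (hGmono.le_iff_le hx hy).1 hxy

lemma le_max_min_iff {c x : ℝ} (hx : x ∈ Ioc α β) : x ≤ max α (min c β) ↔ x ≤ c := by
  simp [hx.1.not_ge, hx.2]

lemma Iic_inter_Ioc_eq_Ioc_max_min (hαβ : α ≤ β) (c : ℝ) :
    Iic c ∩ Ioc α β = Ioc α (max α (min c β)) := by
  ext x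
  simp only [mem_inter_iff, mem_Iic, mem_Ioc]
  constructor
  · rintro ⟨hxc, hx⟩
    exact ⟨hx.1, (le_max_min_iff hx).2 hxc⟩
  · rintro ⟨hαx, hxc⟩
    have hx : x ∈ Ioc α β := ⟨hαx, hxc.trans (max_le hαβ (min_le_right _ _))⟩
    exact ⟨(le_max_min_iff hx).1 hxc, hx⟩

variable (hαβ : α ≤ β) (hGmono : StrictMonoOn G (Icc α β))
  (hGcont : ContinuousOn G (Icc α β)) (hφ : LeftInvOn φ G (Icc α β))
include hαβ hGmono hGcont hφ

lemma aemeasurable_restrict_Ioc_of_leftInvOn :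
    AEMeasurable φ (volume.restrict (Ioc (G α) (G β))) :=
  aemeasurable_restrict_of_monotoneOn measurableSet_Ioc <|
    (monotoneOn_image_of_leftInvOn hGmono hφ).mono
      (Ioc_subset_Icc_self.trans (intermediate_value_Icc hαβ hGcont))

lemma preimage_Iic_inter_Ioc_of_leftInvOn (c : ℝ) :
    φ ⁻¹' Iic c ∩ Ioc (G α) (G β) = Ioc (G α) (G (max α (min c β))) := by
  set c' := max α (min c β)
  have hc' : c' ∈ Icc α β := ⟨le_max_left _ _, max_le hαβ (min_le_right _ _)⟩
  have hGc'_le : G c' ≤ G β := hGmono.monotoneOn hc' ⟨hαβ, le_rfl⟩ hc'.2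
  suffices h : ∀ t ∈ Ioc (G α) (G β), φ t ≤ c ↔ t ≤ G c' by
    ext t
    simp only [mem_inter_iff, mem_preimage, mem_Iic]
    constructor
    · rintro ⟨htc, ht⟩
      exact ⟨ht.1, (h t ht).1 htc⟩
    · rintro ⟨hαt, htc⟩
      have ht : t ∈ Ioc (G α) (G β) := ⟨hαt, htc.trans hGc'_le⟩
      exact ⟨(h t ht).2 htc, ht⟩
  intro t ht
  obtain ⟨x, hx, rfl⟩ := intermediate_value_Icc hαβ hGcont (Ioc_subset_Icc_self ht)
  have hxα : x ∈ Ioc α β := ⟨hx.1.lt_of_ne (by rintro rfl; exact ht.1.false), hx.2⟩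
  rw [hφ hx, ← le_max_min_iff hxα, hGmono.le_iff_le hx hc']

lemma map_restrict_Ioc_eq_withDensity {ρ : ℝ → ℝ≥0∞}
    (hρ : ∀ x ∈ Icc α β, ∫⁻ t in Ioc α x, ρ t = ENNReal.ofReal (G x - G α)) :
    (volume.restrict (Ioc (G α) (G β))).map φ = (volume.restrict (Ioc α β)).withDensity ρ := by
  refine Measure.ext_of_Iic _ _ fun c => ?_
  have hc' : max α (min c β) ∈ Icc α β := ⟨le_max_left _ _, max_le hαβ (min_le_right _ _)⟩
  rw [Measure.map_apply_of_aemeasurable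
      (aemeasurable_restrict_Ioc_of_leftInvOn hαβ hGmono hGcont hφ) measurableSet_Iic,
    Measure.restrict_apply' measurableSet_Ioc,
    preimage_Iic_inter_Ioc_of_leftInvOn hαβ hGmono hGcont hφ, Real.volume_Ioc,
    withDensity_apply _ measurableSet_Iic, Measure.restrict_restrict measurableSet_Iic,
    Iic_inter_Ioc_eq_Ioc_max_min hαβ, hρ _ hc']

lemma setLIntegral_comp_leftInvOn {ρ : ℝ → ℝ≥0∞} (hρm : Measurable ρ)
    (hρ : ∀ x ∈ Icc α β, ∫⁻ t in Ioc α x, ρ t = ENNReal.ofReal (G x - G α))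
    {f : ℝ → ℝ≥0∞} (hf : Measurable f) :
    ∫⁻ t in Ioc (G α) (G β), f (φ t) = ∫⁻ x in Ioc α β, ρ x * f x := by
  rw [← lintegral_map' hf.aemeasurable
      (aemeasurable_restrict_Ioc_of_leftInvOn hαβ hGmono hGcont hφ),
    map_restrict_Ioc_eq_withDensity hαβ hGmono hGcont hφ hρ,
    lintegral_withDensity_eq_lintegral_mul _ hρm hf]
  rfl

end LeftInverse

section Antiderivative

variable {I : Set ℝ} {G : ℝ → ℝ}

lemma intervalIntegrable_of_injOn {f : ℝ → ℝ}
    (hG : ∀ a ∈ I, ∀ b ∈ I, G b - G a = ∫ x in a..b, f x) (hinj : InjOn G I)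
    {a b : ℝ} (ha : a ∈ I) (hb : b ∈ I) : IntervalIntegrable f volume a b := by
  -- a non-integrable `f` would give the junk value `∫ f = 0`, i.e. `G a = G b`
  rcases eq_or_ne a b with rfl | hab
  · exact IntervalIntegrable.refl
  · refine intervalIntegral.intervalIntegrable_of_integral_ne_zero ?_
    rw [← hG a ha b hb, sub_ne_zero]
    exact fun h => hab (hinj ha hb h.symm)

lemma strictMonoOn_of_injOn {f : ℝ → ℝ} (hf : ∀ x, 0 ≤ f x)
    (hG : ∀ a ∈ I, ∀ b ∈ I, G b - G a = ∫ x in a..b, f x) (hinj : InjOn G I) :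
    StrictMonoOn G I :=
  MonotoneOn.strictMonoOn_of_injOn (fun a ha b hb hab => sub_nonneg.1 <|
    hG a ha b hb ▸ intervalIntegral.integral_nonneg hab fun x _ => hf x) hinj

lemma continuousOn_uIcc_of_injOn {f : ℝ → ℝ} (hI : I.OrdConnected)
    (hG : ∀ a ∈ I, ∀ b ∈ I, G b - G a = ∫ x in a..b, f x) (hinj : InjOn G I)
    {a b : ℝ} (ha : a ∈ I) (hb : b ∈ I) : ContinuousOn G (uIcc a b) := by
  refine ((intervalIntegral.continuousOn_primitive_interval'
    (intervalIntegrable_of_injOn hG hinj ha hb) left_mem_uIcc).const_add (G a)).congr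
    fun x hx => eq_add_of_sub_eq' (hG a ha x (hI.uIcc_subset ha hb hx))

lemma setLIntegral_Ioc_eq_ofReal_sub {ρ : ℝ → ℝ≥0∞} (hρ : ∀ x ∈ I, ρ x ≠ ∞)
    (hI : I.OrdConnected) (hG : ∀ a ∈ I, ∀ b ∈ I, G b - G a = ∫ x in a..b, (ρ x).toReal)
    (hinj : InjOn G I) {a b : ℝ} (ha : a ∈ I) (hb : b ∈ I) (hab : a ≤ b) :
    ∫⁻ x in Ioc a b, ρ x = ENNReal.ofReal (G b - G a) := by
  rw [hG a ha b hb, intervalIntegral.integral_of_le hab,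
    ofReal_integral_eq_lintegral_ofReal (intervalIntegrable_of_injOn hG hinj ha hb).1
      (Filter.Eventually.of_forall fun _ => toReal_nonneg)]
  exact setLIntegral_congr_fun measurableSet_Ioc fun x hx =>
    (ofReal_toReal (hρ x (hI.out ha hb (Ioc_subset_Icc_self hx)))).symm

end Antiderivative

lemma intervalIntegrable_toReal_and_integral_eq {f : ℝ → ℝ≥0∞} {a b c : ℝ} (hab : a ≤ b)
    (hf : AEMeasurable f (volume.restrict (Ioc a b)))
    (h : ∫⁻ t in Ioc a b, f t = ENNReal.ofReal c) (hc : 0 ≤ c) :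
    IntervalIntegrable (fun t => (f t).toReal) volume a b ∧
      ∫ t in a..b, (f t).toReal = c := by
  have hfin : ∫⁻ t in Ioc a b, f t ≠ ∞ := h ▸ ofReal_ne_top
  refine ⟨(intervalIntegrable_iff_integrableOn_Ioc_of_le hab).2
    (integrable_toReal_of_lintegral_ne_top hf hfin), ?_⟩
  rw [intervalIntegral.integral_of_le hab, integral_toReal hf (ae_lt_top' hf hfin), h,
    toReal_ofReal hc]

theorem stmt2_general (I : Set ℝ)
    (hIconn : I.OrdConnected)
    (F : ℝ → ℝ≥0∞) (hFmeas : Measurable F)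
    (hpos : ∀ x ∈ I, 0 < F x)
    (hfin : ∀ᵐ x ∂(volume : Measure ℝ), x ∈ I → F x ≠ ⊤)
    (G : ℝ → ℝ)
    (hG : ∀ a ∈ I, ∀ b ∈ I, G b - G a = ∫ x in a..b, ((F x)⁻¹).toReal)
    (φ : ℝ → ℝ)
    (hφinv : ∀ x ∈ I, φ (G x) = x) :
    ∀ a ∈ G '' I, ∀ b ∈ G '' I, a ≤ b →
      IntervalIntegrable (fun t => (F (φ t)).toReal) volume a b ∧
      (∫ t in a..b, (F (φ t)).toReal) = φ b - φ a := by
  rintro _ ⟨α, hα, rfl⟩ _ ⟨β, hβ, rfl⟩ hab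
  have hφ : LeftInvOn φ G I := fun x hx => hφinv x hx
  have hGmono : StrictMonoOn G I := strictMonoOn_of_injOn (fun _ => toReal_nonneg) hG hφ.injOn
  have hαβ : α ≤ β := (hGmono.le_iff_le hα hβ).1 hab
  have hsub : Icc α β ⊆ I := hIconn.out hα hβ
  have hGmono' := hGmono.mono hsub
  have hGcont : ContinuousOn G (Icc α β) :=
    (continuousOn_uIcc_of_injOn hIconn hG hφ.injOn hα hβ).mono Icc_subset_uIcc
  have hρ : ∀ x ∈ Icc α β, ∫⁻ t in Ioc α x, (F t)⁻¹ = ENNReal.ofReal (G x - G α) :=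
    fun x hx => setLIntegral_Ioc_eq_ofReal_sub (fun y hy => inv_ne_top.2 (hpos y hy).ne')
      hIconn hG hφ.injOn hα (hsub hx) hx.1
  have key : ∫⁻ t in Ioc (G α) (G β), F (φ t) = ENNReal.ofReal (β - α) := by
    rw [setLIntegral_comp_leftInvOn hαβ hGmono' hGcont (hφ.mono hsub) hFmeas.inv hρ hFmeas,
      ← Real.volume_Ioc, ← setLIntegral_one]
    refine setLIntegral_congr_fun_ae measurableSet_Ioc ?_
    filter_upwards [hfin] with x hxfin hx
    have hxI : x ∈ I := hsub (Ioc_subset_Icc_self hx)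
    exact ENNReal.inv_mul_cancel (hpos x hxI).ne' (hxfin hxI)
  rw [hφ hα, hφ hβ]
  exact intervalIntegrable_toReal_and_integral_eq hab
    (hFmeas.comp_aemeasurable
      (aemeasurable_restrict_Ioc_of_leftInvOn hαβ hGmono' hGcont (hφ.mono hsub)))
    key (sub_nonneg.2 hαβ)

/-- For the inverse `φ = G⁻¹` of an antiderivative `G` of `1/F`, one has
`∫_a^b F(φ(t)) dt = φ(b) − φ(a)` for all `a ≤ b` in `J = G(I)`; in particular
`F ∘ φ` is locally integrable on `J`. -/
theorem stmt2 (I : Set ℝ) (hIopen : IsOpen I) (hIne : I.Nonempty)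
    (hIconn : I.OrdConnected)
    (F : ℝ → ℝ≥0∞) (hFmeas : Measurable F)
    (hpos : ∀ x ∈ I, 0 < F x)
    (hlsc : LowerSemicontinuousOn F I)
    (hfin : ∀ᵐ x ∂(volume : Measure ℝ), x ∈ I → F x ≠ ⊤)
    (G : ℝ → ℝ)
    (hG : ∀ a ∈ I, ∀ b ∈ I, G b - G a = ∫ x in a..b, ((F x)⁻¹).toReal)
    (φ : ℝ → ℝ)
    (hφinv : ∀ x ∈ I, φ (G x) = x)
    (hφsurj : φ '' (G '' I) = I)
    (hφmono : StrictMonoOn φ (G '' I))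
    (hφcont : ContinuousOn φ (G '' I)) :
    ∀ a ∈ G '' I, ∀ b ∈ G '' I, a ≤ b →
      IntervalIntegrable (fun t => (F (φ t)).toReal) volume a b ∧
      (∫ t in a..b, (F (φ t)).toReal) = φ b - φ a :=
  stmt2_general I hIconn F hFmeas hpos hfin G hG φ hφinv
end

section
/- Let X be a metric space, K : X → [0,∞] lower semicontinuous, and a ≤ b real numbers. Then the map γ ↦ inf_{t ∈ [a,b]} K(γ(t)) is lower semicontinuous on the space C([a,b], X) of continuous curves endowed with the topology of uniform convergence. -/
open Set ENNReal

theorem LowerSemicontinuous.iInf_comp_continuousMap {T X α : Type*} [TopologicalSpace T]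
    [CompactSpace T] [TopologicalSpace X] [CompleteLinearOrder α] [DenselyOrdered α] {K : X → α}
    (hK : LowerSemicontinuous K) :
    LowerSemicontinuous fun γ : C(T, X) => ⨅ t, K (γ t) := by
  intro γ c hc
  obtain ⟨c', hcc', hc'⟩ := exists_between hc
  have hγ : MapsTo γ univ (K ⁻¹' Ioi c') := fun t _ => hc'.trans_le (iInf_le _ t)
  filter_upwards [ContinuousMap.eventually_mapsTo isCompact_univ (hK.isOpen_preimage c') hγ]
    with γ' hγ'
  exact hcc'.trans_le (le_iInf fun t => (hγ' (mem_univ t)).le)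

theorem stmt5_general {X : Type*} [MetricSpace X] (K : X → ℝ≥0∞)
    (hK : LowerSemicontinuous K) (a b : ℝ) :
    LowerSemicontinuous (fun γ : C(Set.Icc a b, X) => ⨅ t : Set.Icc a b, K (γ t)) :=
  hK.iInf_comp_continuousMap

/-- If `K` is lower semicontinuous then `γ ↦ inf_{t ∈ [a,b]} K (γ t)` is lower
semicontinuous on `C([a,b], X)` with the uniform-convergence (compact-open)
topology. -/
theorem stmt5 {X : Type*} [MetricSpace X] (K : X → ℝ≥0∞)
    (hK : LowerSemicontinuous K) (a b : ℝ) (hab : a ≤ b) :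
    LowerSemicontinuous (fun γ : C(Set.Icc a b, X) => ⨅ t : Set.Icc a b, K (γ t)) :=
  stmt5_general K hK a b
end

section
/- Let X be a metric space, K : X → [0,∞] lower semicontinuous, and I ⊂ ℝ an interval. Then the functional A_K(γ) := sup over finite subdivisions t_0 ≤ … ≤ t_N in I of Σ_i (inf_{[t_i,t_{i+1}]} K∘γ) · d(γ(t_i), γ(t_{i+1})) is lower semicontinuous on C(I, X) endowed with the topology of uniform convergence on compact subsets of I. -/
open Set MeasureTheory ENNReal Filter Topology

/-- The generalized weighted-length functional
`A_K(γ) = sup Σᵢ (inf_{[tᵢ,tᵢ₊₁]} K∘γ) d(γ(tᵢ), γ(tᵢ₊₁))`. -/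
noncomputable def AK {X : Type*} [EMetricSpace X] (K : X → ℝ≥0∞) (I : Set ℝ)
    (γ : ℝ → X) : ℝ≥0∞ :=
  ⨆ (N : ℕ) (t : Fin (N + 1) → ℝ) (_ : ∀ i, t i ∈ I) (_ : Monotone t),
    ∑ i : Fin N,
      (⨅ s ∈ Set.Icc (t i.castSucc) (t i.succ), K (γ s)) *
        edist (γ (t i.castSucc)) (γ (t i.succ))

/-! Each partition sum of `A_K` is lower semicontinuous, so `A_K`, a supremum of such sums, is
too. In a summand, the distance term converges, and the infimum of `K` is lower semicontinuous:
if `K > c` on the compact set `γ([tᵢ, tᵢ₊₁])`, then `K > c` on some uniform neighbourhood of it,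
which contains `γₙ([tᵢ, tᵢ₊₁])` for large `n`. -/

theorem ENNReal.le_liminf_add {α : Type*} (u v : α → ℝ≥0∞) (l : Filter α) :
    liminf u l + liminf v l ≤ liminf (u + v) l := by
  simp only [liminf_eq_iSup_iInf]
  refine biSup_add_biSup_le' ⟨univ, univ_mem⟩ ⟨univ, univ_mem⟩ fun s hs t ht => ?_
  exact le_iSup₂_of_le (s ∩ t) (inter_mem hs ht) <|
    le_iInf₂ fun x hx => add_le_add (iInf₂_le x hx.1) (iInf₂_le x hx.2)

theorem ENNReal.sum_liminf_le_liminf_sum {ι α : Type*} (s : Finset ι) (f : ι → α → ℝ≥0∞)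
    (l : Filter α) : ∑ i ∈ s, liminf (f i) l ≤ liminf (fun x => ∑ i ∈ s, f i x) l := by
  classical
  induction s using Finset.induction_on with
  | empty => simp
  | insert i s hi ih =>
    simp only [Finset.sum_insert hi]
    exact (add_le_add le_rfl ih).trans (le_liminf_add _ _ l)

section

variable {α X ι : Type*} [TopologicalSpace α] [PseudoMetricSpace X] {K : X → ℝ≥0∞}
  {C : Set α} {γ : α → X} {F : ι → α → X} {l : Filter ι}

theorem LowerSemicontinuous.biInf_le_liminf_of_tendstoUniformlyOn (hK : LowerSemicontinuous K)
    (hC : IsCompact C) (hγ : ContinuousOn γ C) (hF : TendstoUniformlyOn F γ l C) :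
    ⨅ s ∈ C, K (γ s) ≤ liminf (fun n => ⨅ s ∈ C, K (F n s)) l := by
  refine (le_liminf_iff).2 fun c hc => ?_
  obtain ⟨c', hcc', hc'⟩ := exists_between hc
  have hγC : γ '' C ⊆ {x | c' < K x} := by
    rintro _ ⟨s, hs, rfl⟩
    exact hc'.trans_le (biInf_le _ hs)
  obtain ⟨ε, hε, hthick⟩ :=
    (hC.image_of_continuousOn hγ).exists_thickening_subset_open (hK.isOpen_preimage c') hγC
  filter_upwards [Metric.tendstoUniformlyOn_iff.1 hF ε hε] with n hn
  refine hcc'.trans_le (le_iInf₂ fun s hs => (hthick ?_).le)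
  exact Metric.mem_thickening_iff.2
    ⟨γ s, mem_image_of_mem γ hs, by simpa [dist_comm] using hn s hs⟩

theorem LowerSemicontinuous.biInf_mul_edist_le_liminf [l.NeBot] (hK : LowerSemicontinuous K)
    (hC : IsCompact C) (hγ : ContinuousOn γ C) (hF : TendstoUniformlyOn F γ l C)
    {a b : α} (ha : a ∈ C) (hb : b ∈ C) :
    (⨅ s ∈ C, K (γ s)) * edist (γ a) (γ b) ≤
      liminf (fun n => (⨅ s ∈ C, K (F n s)) * edist (F n a) (F n b)) l := by
  have hdist : Tendsto (fun n => edist (F n a) (F n b)) l (𝓝 (edist (γ a) (γ b))) :=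
    (hF.tendsto_at ha).edist (hF.tendsto_at hb)
  calc (⨅ s ∈ C, K (γ s)) * edist (γ a) (γ b)
      ≤ liminf (fun n => ⨅ s ∈ C, K (F n s)) l * liminf (fun n => edist (F n a) (F n b)) l := by
        gcongr
        · exact hK.biInf_le_liminf_of_tendstoUniformlyOn hC hγ hF
        · exact hdist.liminf_eq.ge
    _ ≤ _ := ENNReal.le_liminf_mul

end

theorem sum_le_AK {X : Type*} [EMetricSpace X] (K : X → ℝ≥0∞) {I : Set ℝ} (γ : ℝ → X) {N : ℕ}
    {t : Fin (N + 1) → ℝ} (ht : ∀ i, t i ∈ I) (hmono : Monotone t) :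
    ∑ i : Fin N, (⨅ s ∈ Icc (t i.castSucc) (t i.succ), K (γ s)) *
      edist (γ (t i.castSucc)) (γ (t i.succ)) ≤ AK K I γ :=
  le_iSup_of_le N <| le_iSup_of_le t <| le_iSup_of_le ht <| le_iSup_of_le hmono le_rfl

theorem stmt6_general {X : Type*} [MetricSpace X] (K : X → ℝ≥0∞)
    (hK : LowerSemicontinuous K) (I : Set ℝ) (hI : I.OrdConnected)
    (γ : ℝ → X) (γn : ℕ → ℝ → X)
    (hγ : ContinuousOn γ I)
    (hconv : ∀ C : Set ℝ, IsCompact C → C ⊆ I →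
      TendstoUniformlyOn (fun n => γn n) γ atTop C) :
    AK K I γ ≤ liminf (fun n => AK K I (γn n)) atTop := by
  refine iSup_le fun N => iSup_le fun t => iSup_le fun ht => iSup_le fun hmono => ?_
  calc _ ≤ ∑ i : Fin N, liminf (fun n => (⨅ s ∈ Icc (t i.castSucc) (t i.succ), K (γn n s)) *
            edist (γn n (t i.castSucc)) (γn n (t i.succ))) atTop := by
        refine Finset.sum_le_sum fun i _ => ?_
        have hsub : Icc (t i.castSucc) (t i.succ) ⊆ I := hI.out (ht _) (ht _)
        have hle : t i.castSucc ≤ t i.succ := hmono i.castSucc_le_succ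
        exact hK.biInf_mul_edist_le_liminf isCompact_Icc (hγ.mono hsub)
          (hconv _ isCompact_Icc hsub) (left_mem_Icc.2 hle) (right_mem_Icc.2 hle)
    _ ≤ liminf (fun n => ∑ i : Fin N, (⨅ s ∈ Icc (t i.castSucc) (t i.succ), K (γn n s)) *
            edist (γn n (t i.castSucc)) (γn n (t i.succ))) atTop :=
        ENNReal.sum_liminf_le_liminf_sum _ _ _
    _ ≤ _ := liminf_le_liminf (.of_forall fun n => sum_le_AK K (γn n) ht hmono)

/-- For l.s.c. `K`, the functional `A_K` is (sequentially) lower semicontinuous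
on `C(I, X)` for the topology of uniform convergence on compact subsets of `I`. -/
theorem stmt6 {X : Type*} [MetricSpace X] (K : X → ℝ≥0∞)
    (hK : LowerSemicontinuous K) (I : Set ℝ) (hI : I.OrdConnected)
    (γ : ℝ → X) (γn : ℕ → ℝ → X)
    (hcont : ∀ n, ContinuousOn (γn n) I) (hγ : ContinuousOn γ I)
    (hconv : ∀ C : Set ℝ, IsCompact C → C ⊆ I →
      TendstoUniformlyOn (fun n => γn n) γ atTop C) :
    AK K I γ ≤ liminf (fun n => AK K I (γn n)) atTop :=
  stmt6_general K hK I hI γ γn hγ hconv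
end

section
/- Let f, E : J → (0,∞) be C² functions on an open interval J ⊂ ℝ satisfying f''/f ≥ c₀ f^{p₀−2} and E''/E = c E^{p₀−2} on J, where 0 < c < c₀ and p₀ ≥ 2. Suppose J = (r₁, r₂) is bounded, f > E on J, and f = E at both endpoints (by continuity). Then a contradiction arises; i.e., there is no such f. Equivalently: if f''/f ≥ c₀ f^{p₀−2} and f ≥ E on a bounded interval with equality at the endpoints, and E''/E = c E^{p₀−2} with c < c₀, then f ≡ E. -/
/-!
Let `x₀` maximise `f / E` on `[r₁, r₂]`. If the maximum `m` exceeded `1`, then `x₀` would be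
interior (the ratio is `1` at the endpoints) and `f - m E ≤ 0` would touch `0` at `x₀`, so
`f'' ≤ m E''` there, i.e. `f''/f ≤ E''/E`. Together with `E ≤ f` this chains into
`c₀ f^{p₀-2} ≤ f''/f ≤ E''/E = c E^{p₀-2} ≤ c f^{p₀-2}`, impossible for `c < c₀`.
-/

open Set Filter Topology

theorem IsLocalMax.second_deriv_nonpos {g g' : ℝ → ℝ} {x₀ d : ℝ} (hmax : IsLocalMax g x₀)
    (hg : ∀ᶠ x in 𝓝 x₀, HasDerivAt g (g' x) x) (hg' : HasDerivAt g' d x₀) : d ≤ 0 := by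
  by_contra! hd
  have hderiv : deriv g =ᶠ[𝓝 x₀] g' := hg.mono fun x hx => hx.deriv
  have hd2 : deriv (deriv g) x₀ = d := (hg'.congr_of_eventuallyEq hderiv).deriv
  have hmin : IsLocalMin g x₀ :=
    isLocalMin_of_deriv_deriv_pos (hd2 ▸ hd) hmax.deriv_eq_zero hg.self_of_nhds.continuousAt
  -- being both a local min and a local max, `g` is locally constant, so `g'' x₀ = 0`
  have hconst : g =ᶠ[𝓝 x₀] fun _ => g x₀ :=
    (hmin.and hmax).mono fun x hx => le_antisymm hx.2 hx.1
  have : deriv (deriv g) x₀ = 0 := by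
    rw [hconst.deriv.deriv_eq]
    simp
  linarith

theorem IsLocalMax.second_deriv_mul_le_mul_of_div {f f' f'' E E' E'' : ℝ → ℝ} {x₀ : ℝ}
    (hmax : IsLocalMax (fun x => f x / E x) x₀) (hE : ∀ᶠ x in 𝓝 x₀, 0 < E x)
    (hf₁ : ∀ᶠ x in 𝓝 x₀, HasDerivAt f (f' x) x) (hf₂ : HasDerivAt f' (f'' x₀) x₀)
    (hE₁ : ∀ᶠ x in 𝓝 x₀, HasDerivAt E (E' x) x) (hE₂ : HasDerivAt E' (E'' x₀) x₀) :
    f'' x₀ * E x₀ ≤ f x₀ * E'' x₀ := by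
  set m := f x₀ / E x₀
  have hE₀ : 0 < E x₀ := hE.self_of_nhds
  have hmE₀ : m * E x₀ = f x₀ := div_mul_cancel₀ _ hE₀.ne'
  have hmax' : IsLocalMax (fun x => f x - m * E x) x₀ := by
    filter_upwards [hmax, hE] with x hx hEx
    rw [hmE₀, sub_self, sub_nonpos]
    exact (div_le_iff₀ hEx).1 hx
  have hd : f'' x₀ - m * E'' x₀ ≤ 0 :=
    hmax'.second_deriv_nonpos ((hf₁.and hE₁).mono fun x hx => hx.1.sub (hx.2.const_mul m))
      (hf₂.sub (hE₂.const_mul m))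
  calc f'' x₀ * E x₀ ≤ m * E'' x₀ * E x₀ := by gcongr; linarith
    _ = f x₀ * E'' x₀ := by rw [mul_right_comm, hmE₀]

theorem mul_rpow_lt_mul_rpow_of_le {a b c c₀ q : ℝ} (ha : 0 < a) (hab : a ≤ b) (hc : 0 ≤ c)
    (hcc : c < c₀) (hq : 0 ≤ q) : c * a ^ q < c₀ * b ^ q :=
  calc c * a ^ q ≤ c * b ^ q := by gcongr
    _ < c₀ * b ^ q := mul_lt_mul_of_pos_right hcc (Real.rpow_pos_of_pos (ha.trans_le hab) q)

theorem stmt10_general (c c₀ p₀ r₁ r₂ : ℝ) (hc : 0 < c) (hcc : c < c₀) (hp : 2 ≤ p₀)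
    (f f' f'' E E' E'' : ℝ → ℝ)
    (hfc : ContinuousOn f (Set.Icc r₁ r₂)) (hEc : ContinuousOn E (Set.Icc r₁ r₂))
    (hEpos : ∀ x ∈ Set.Icc r₁ r₂, 0 < E x)
    (hfd : ∀ x ∈ Set.Ioo r₁ r₂, HasDerivAt f (f' x) x)
    (hfd2 : ∀ x ∈ Set.Ioo r₁ r₂, HasDerivAt f' (f'' x) x)
    (hEd : ∀ x ∈ Set.Ioo r₁ r₂, HasDerivAt E (E' x) x)
    (hEd2 : ∀ x ∈ Set.Ioo r₁ r₂, HasDerivAt E' (E'' x) x)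
    (hfode : ∀ x ∈ Set.Ioo r₁ r₂, c₀ * f x ^ (p₀ - 2) ≤ f'' x / f x)
    (hEode : ∀ x ∈ Set.Ioo r₁ r₂, E'' x / E x = c * E x ^ (p₀ - 2))
    (hge : ∀ x ∈ Set.Icc r₁ r₂, E x ≤ f x)
    (h1 : f r₁ = E r₁) (h2 : f r₂ = E r₂) :
    ∀ x ∈ Set.Icc r₁ r₂, f x = E x := by
  intro x hx
  obtain ⟨x₀, hx₀, hmax⟩ := isCompact_Icc.exists_isMaxOn ⟨x, hx⟩
    (hfc.div hEc fun y hy => (hEpos y hy).ne')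
  suffices hle : f x₀ / E x₀ ≤ 1 from
    le_antisymm ((div_le_one (hEpos x hx)).1 ((hmax hx).trans hle)) (hge x hx)
  by_contra! hlt
  have hr : r₁ ≤ r₂ := hx.1.trans hx.2
  have hx₀' : x₀ ∈ Ioo r₁ r₂ := by
    refine ⟨hx₀.1.lt_of_ne ?_, hx₀.2.lt_of_ne' ?_⟩ <;> rintro rfl
    · rw [h1, div_self (hEpos _ (left_mem_Icc.2 hr)).ne'] at hlt
      exact lt_irrefl _ hlt
    · rw [h2, div_self (hEpos _ (right_mem_Icc.2 hr)).ne'] at hlt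
      exact lt_irrefl _ hlt
  have hnhds : Ioo r₁ r₂ ∈ 𝓝 x₀ := isOpen_Ioo.mem_nhds hx₀'
  have hkey := (hmax.isLocalMax (Icc_mem_nhds hx₀'.1 hx₀'.2)).second_deriv_mul_le_mul_of_div
    (eventually_of_mem hnhds fun y hy => hEpos y (Ioo_subset_Icc_self hy))
    (eventually_of_mem hnhds hfd) (hfd2 x₀ hx₀') (eventually_of_mem hnhds hEd) (hEd2 x₀ hx₀')
  have hE₀ : 0 < E x₀ := hEpos x₀ hx₀
  have hratio : f'' x₀ / f x₀ ≤ E'' x₀ / E x₀ :=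
    (div_le_div_iff₀ (hE₀.trans_le (hge x₀ hx₀)) hE₀).2 (hkey.trans_eq (mul_comm _ _))
  have hpow := mul_rpow_lt_mul_rpow_of_le hE₀ (hge x₀ hx₀) hc.le hcc (sub_nonneg.2 hp)
  linarith [hfode x₀ hx₀', hEode x₀ hx₀']

/-- Comparison principle for the funnel ODE: if `f''/f ≥ c₀ f^{p₀−2}` and
`E''/E = c E^{p₀−2}` with `0 < c < c₀` on a bounded interval, `f ≥ E` inside
with equality at the endpoints, then `f ≡ E`. -/
theorem stmt10 (c c₀ p₀ r₁ r₂ : ℝ) (hc : 0 < c) (hcc : c < c₀) (hp : 2 ≤ p₀)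
    (hr : r₁ < r₂)
    (f f' f'' E E' E'' : ℝ → ℝ)
    (hfc : ContinuousOn f (Set.Icc r₁ r₂)) (hEc : ContinuousOn E (Set.Icc r₁ r₂))
    (hfpos : ∀ x ∈ Set.Icc r₁ r₂, 0 < f x)
    (hEpos : ∀ x ∈ Set.Icc r₁ r₂, 0 < E x)
    (hfd : ∀ x ∈ Set.Ioo r₁ r₂, HasDerivAt f (f' x) x)
    (hfd2 : ∀ x ∈ Set.Ioo r₁ r₂, HasDerivAt f' (f'' x) x)
    (hEd : ∀ x ∈ Set.Ioo r₁ r₂, HasDerivAt E (E' x) x)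
    (hEd2 : ∀ x ∈ Set.Ioo r₁ r₂, HasDerivAt E' (E'' x) x)
    (hfode : ∀ x ∈ Set.Ioo r₁ r₂, c₀ * f x ^ (p₀ - 2) ≤ f'' x / f x)
    (hEode : ∀ x ∈ Set.Ioo r₁ r₂, E'' x / E x = c * E x ^ (p₀ - 2))
    (hge : ∀ x ∈ Set.Icc r₁ r₂, E x ≤ f x)
    (h1 : f r₁ = E r₁) (h2 : f r₂ = E r₂) :
    ∀ x ∈ Set.Icc r₁ r₂, f x = E x :=
  stmt10_general c c₀ p₀ r₁ r₂ hc hcc hp f f' f'' E E' E'' hfc hEc hEpos hfd hfd2 hEd hEd2 hfode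
    hEode hge h1 h2
end

section
/- Let W : ℝⁿ → ℝ be C² with Hessian bounded below by λ·Id (λ ≤ 0), and let ρ : ℝ → [0,∞) be a mollifier with unit mass supported in [−δ,δ]. Then for every v ∈ H¹_loc(ℝ, ℝⁿ), ∫_ℝ W((v*ρ)(s)) ds ≤ ∫_ℝ W(v(t)) dt + 4δ²|λ| ∫_ℝ |v'(s)|² ds (whenever both integrals of W are well defined). -/
/-!
Subtracting `λ/2 ‖x - c‖²` from `W` leaves a convex function, so Jensen's inequality for the
probability measure `ρ(s - t) dt`, centred at `c = v s`, gives
`W((v * ρ)(s)) ≤ ∫ ρ(s - t) W(v t) dt + |λ|/2 · sup_{|t - s| ≤ δ} ‖v t - v s‖²`.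
By Cauchy–Schwarz, `‖v t - v s‖² ≤ δ ∫_{s-δ}^{s+δ} ‖v'‖²` for `|t - s| ≤ δ`. Integrating in `s`
(Fubini: `∫ ρ = 1`, and every point lies in windows `[s - δ, s + δ]` of total measure `2δ`)
gives the bound with the constant `δ²|λ| ≤ 4δ²|λ|`.
-/

open Set MeasureTheory Interval

theorem convexOn_univ_of_convexOn_add_smul {E : Type*} [AddCommGroup E] [Module ℝ E]
    {f : E → ℝ} (h : ∀ x u : E, ConvexOn ℝ univ fun t : ℝ => f (x + t • u)) :
    ConvexOn ℝ univ f := by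
  refine ⟨convex_univ, fun x _ y _ a b ha hb hab => ?_⟩
  have key := (h x (y - x)).2 (mem_univ 0) (mem_univ 1) ha hb hab
  have hline : x + b • (y - x) = a • x + b • y := by
    rw [eq_sub_of_add_eq hab]; module
  simpa [hline] using key

theorem hasDerivAt_comp_add_smul {E F : Type*} [NormedAddCommGroup E] [NormedSpace ℝ E]
    [NormedAddCommGroup F] [NormedSpace ℝ F] {f : E → F} {x u : E} {t : ℝ}
    (hf : DifferentiableAt ℝ f (x + t • u)) :
    HasDerivAt (fun t : ℝ => f (x + t • u)) (fderiv ℝ f (x + t • u) u) t :=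
  hf.hasFDerivAt.comp_hasDerivAt t
    ((((hasDerivAt_id t).smul_const u).const_add x).congr_deriv (one_smul ℝ u))

theorem sq_integral_le_measureReal_mul_integral_sq {α : Type*} [MeasurableSpace α]
    {μ : Measure α} [IsFiniteMeasure μ] {f : α → ℝ} (hf₀ : 0 ≤ᵐ[μ] f) (hf : MemLp f 2 μ) :
    (∫ a, f a ∂μ) ^ 2 ≤ μ.real univ * ∫ a, f a ^ 2 ∂μ := by
  have hHolder := integral_mul_le_Lp_mul_Lq_of_nonneg Real.HolderConjugate.two_two hf₀
    (ae_of_all _ fun _ => zero_le_one) (by simpa using hf) (memLp_const (1 : ℝ))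
  simp only [Real.rpow_two, one_pow, mul_one, integral_const, smul_eq_mul] at hHolder
  rw [← Real.sqrt_eq_rpow, ← Real.sqrt_eq_rpow] at hHolder
  have hA : 0 ≤ ∫ a, f a ^ 2 ∂μ := integral_nonneg fun _ => sq_nonneg _
  calc (∫ a, f a ∂μ) ^ 2 ≤ (√(∫ a, f a ^ 2 ∂μ) * √(μ.real univ)) ^ 2 :=
        pow_le_pow_left₀ (integral_nonneg_of_ae hf₀) hHolder 2
    _ = μ.real univ * ∫ a, f a ^ 2 ∂μ := by
        rw [mul_pow, Real.sq_sqrt hA, Real.sq_sqrt measureReal_nonneg, mul_comm]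

theorem MeasureTheory.Integrable.memLp_two_norm {α F : Type*} [MeasurableSpace α] {μ : Measure α}
    [NormedAddCommGroup F] {g : α → F} (h : Integrable (fun a => ‖g a‖ ^ 2) μ) :
    MemLp (fun a => ‖g a‖) 2 μ := by
  have hmeas : AEStronglyMeasurable (fun a => ‖g a‖) μ := by
    simpa [Real.sqrt_sq (norm_nonneg _)] using Real.continuous_sqrt.comp_aestronglyMeasurable h.1
  exact (memLp_two_iff_integrable_sq hmeas).2 h

section WeightedMeasure

variable {α : Type*} [MeasurableSpace α] {μ : Measure α} {w : α → ℝ}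

theorem integral_withDensity_ofReal {G : Type*} [NormedAddCommGroup G] [NormedSpace ℝ G]
    (hw : Measurable w) (hw₀ : 0 ≤ w) (g : α → G) :
    ∫ a, g a ∂μ.withDensity (fun a => ENNReal.ofReal (w a)) = ∫ a, w a • g a ∂μ := by
  rw [integral_withDensity_eq_integral_toReal_smul (by fun_prop)
    (ae_of_all _ fun _ => ENNReal.ofReal_lt_top)]
  simp_rw [ENNReal.toReal_ofReal (hw₀ _)]

theorem integrable_withDensity_ofReal_iff {G : Type*} [NormedAddCommGroup G]
    [NormedSpace ℝ G] (hw : Measurable w) (hw₀ : 0 ≤ w) {g : α → G} :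
    Integrable g (μ.withDensity fun a => ENNReal.ofReal (w a)) ↔
      Integrable (fun a => w a • g a) μ := by
  rw [integrable_withDensity_iff_integrable_smul' (by fun_prop)
    (ae_of_all _ fun _ => ENNReal.ofReal_lt_top)]
  simp_rw [ENNReal.toReal_ofReal (hw₀ _)]

theorem isProbabilityMeasure_withDensity_ofReal (hw : Integrable w μ) (hw₀ : 0 ≤ w)
    (hw₁ : ∫ a, w a ∂μ = 1) :
    IsProbabilityMeasure (μ.withDensity fun a => ENNReal.ofReal (w a)) := by
  constructor
  rw [withDensity_apply _ MeasurableSet.univ, Measure.restrict_univ,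
    ← ofReal_integral_eq_lintegral_ofReal hw (ae_of_all _ hw₀), hw₁, ENNReal.ofReal_one]

theorem Continuous.integrable_withDensity_ofReal [TopologicalSpace α] [OpensMeasurableSpace α]
    [IsFiniteMeasureOnCompacts μ] {G : Type*} [NormedAddCommGroup G] [NormedSpace ℝ G]
    {g : α → G} (hg : Continuous g) (hw : Continuous w) (hws : HasCompactSupport w)
    (hw₀ : 0 ≤ w) : Integrable g (μ.withDensity fun a => ENNReal.ofReal (w a)) :=
  (integrable_withDensity_ofReal_iff hw.measurable hw₀).2
    ((hw.smul hg).integrable_of_hasCompactSupport hws.smul_right)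

end WeightedMeasure

section Convolution

variable {G : Type*} [AddGroup G] [MeasurableSpace G] [MeasurableAdd₂ G] [MeasurableNeg G]
  {μ : Measure G} [SFinite μ] [μ.IsAddRightInvariant] {k F : G → ℝ}

theorem MeasureTheory.Integrable.integrable_integral_mul_sub (hk : Integrable k μ)
    (hF : Integrable F μ) : Integrable (fun s => ∫ t, k (s - t) * F t ∂μ) μ := by
  convert hF.integrable_convolution (ContinuousLinearMap.mul ℝ ℝ) hk using 1
  ext s
  simp [convolution_def, mul_comm]

theorem integral_integral_mul_sub (hk : Integrable k μ) (hF : Integrable F μ) :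
    ∫ s, ∫ t, k (s - t) * F t ∂μ ∂μ = (∫ s, k s ∂μ) * ∫ t, F t ∂μ := by
  simpa [convolution_def, mul_comm] using
    integral_convolution (ContinuousLinearMap.mul ℝ ℝ) hF hk

end Convolution

theorem setIntegral_Icc_sub_add_eq_integral_indicator_mul (F : ℝ → ℝ) (s δ : ℝ) :
    ∫ u in Icc (s - δ) (s + δ), F u = ∫ u, (Icc (-δ) δ).indicator 1 (s - u) * F u := by
  rw [← integral_indicator measurableSet_Icc]
  congr 1 with u
  by_cases hu : u ∈ Icc (s - δ) (s + δ)
  · have : s - u ∈ Icc (-δ) δ := ⟨by linarith [hu.2], by linarith [hu.1]⟩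
    simp [hu, this]
  · have : s - u ∉ Icc (-δ) δ := fun h => hu ⟨by linarith [h.2], by linarith [h.1]⟩
    simp [hu, this]

theorem integrable_indicator_Icc_one (a b : ℝ) : Integrable ((Icc a b).indicator (1 : ℝ → ℝ)) :=
  (integrable_indicator_iff measurableSet_Icc).2 (integrableOn_const measure_Icc_lt_top.ne)

theorem integrable_setIntegral_Icc_sub_add {F : ℝ → ℝ} (hF : Integrable F) (δ : ℝ) :
    Integrable fun s => ∫ u in Icc (s - δ) (s + δ), F u := by
  simp_rw [setIntegral_Icc_sub_add_eq_integral_indicator_mul]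
  exact (integrable_indicator_Icc_one _ _).integrable_integral_mul_sub hF

theorem integral_setIntegral_Icc_sub_add {F : ℝ → ℝ} (hF : Integrable F) {δ : ℝ} (hδ : 0 ≤ δ) :
    ∫ s, ∫ u in Icc (s - δ) (s + δ), F u = 2 * δ * ∫ u, F u := by
  simp_rw [setIntegral_Icc_sub_add_eq_integral_indicator_mul]
  rw [integral_integral_mul_sub (integrable_indicator_Icc_one _ _) hF,
    integral_indicator_one measurableSet_Icc, Real.volume_real_Icc_of_le (by linarith)]
  ring

section AbsolutelyContinuous

variable {F : Type*} [NormedAddCommGroup F] [NormedSpace ℝ F] {v v' : ℝ → F}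

theorem sq_norm_sub_le_abs_mul_setIntegral_uIoc
    (hAC : ∀ s t : ℝ, s ≤ t → v t - v s = ∫ u in s..t, v' u)
    (hv' : MemLp (fun u => ‖v' u‖) 2) (s t : ℝ) :
    ‖v t - v s‖ ^ 2 ≤ |t - s| * ∫ u in Ι s t, ‖v' u‖ ^ 2 := by
  have key {a b : ℝ} (hab : a ≤ b) :
      ‖v b - v a‖ ^ 2 ≤ (b - a) * ∫ u in Ioc a b, ‖v' u‖ ^ 2 := by
    have hCS := sq_integral_le_measureReal_mul_integral_sq (μ := volume.restrict (Ioc a b))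
      (ae_of_all _ fun _ => norm_nonneg _) (hv'.restrict _)
    rw [measureReal_restrict_apply_univ, Real.volume_real_Ioc_of_le hab] at hCS
    refine le_trans ?_ hCS
    rw [hAC a b hab, ← intervalIntegral.integral_of_le hab]
    exact pow_le_pow_left₀ (norm_nonneg _) (intervalIntegral.norm_integral_le_integral_norm hab) 2
  rcases le_total s t with hst | hts
  · rw [uIoc_of_le hst, abs_of_nonneg (sub_nonneg.2 hst)]
    exact key hst
  · rw [uIoc_of_ge hts, abs_sub_comm, abs_of_nonneg (sub_nonneg.2 hts), norm_sub_rev]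
    exact key hts

theorem continuous_of_forall_sub_eq_intervalIntegral
    (hAC : ∀ s t : ℝ, s ≤ t → v t - v s = ∫ u in s..t, v' u)
    (hv' : MemLp (fun u => ‖v' u‖) 2) : Continuous v := by
  have hbound (s t : ℝ) : ‖v t - v s‖ ≤ √(|t - s| * ∫ u, ‖v' u‖ ^ 2) := by
    refine Real.le_sqrt_of_sq_le ((sq_norm_sub_le_abs_mul_setIntegral_uIoc hAC hv' s t).trans ?_)
    refine mul_le_mul_of_nonneg_left (setIntegral_le_integral ?_ ?_) (abs_nonneg _)
    · exact (memLp_two_iff_integrable_sq hv'.1).1 hv'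
    · exact ae_of_all _ fun _ => sq_nonneg _
  refine continuous_iff_continuousAt.2 fun s => tendsto_iff_norm_sub_tendsto_zero.2 ?_
  refine squeeze_zero (fun _ => norm_nonneg _) (hbound s) ?_
  have : Continuous fun t => √(|t - s| * ∫ u, ‖v' u‖ ^ 2) := by fun_prop
  simpa using this.tendsto s

theorem sq_norm_sub_le_mul_setIntegral_Icc
    (hAC : ∀ s t : ℝ, s ≤ t → v t - v s = ∫ u in s..t, v' u)
    (hv' : MemLp (fun u => ‖v' u‖) 2) {s t δ : ℝ} (hts : |t - s| ≤ δ) :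
    ‖v t - v s‖ ^ 2 ≤ δ * ∫ u in Icc (s - δ) (s + δ), ‖v' u‖ ^ 2 := by
  obtain ⟨hlo, hhi⟩ := abs_le.1 hts
  have hwindow : Ι s t ⊆ Icc (s - δ) (s + δ) :=
    uIoc_subset_uIcc.trans (uIcc_subset_Icc ⟨by linarith, by linarith⟩ ⟨by linarith, by linarith⟩)
  refine (sq_norm_sub_le_abs_mul_setIntegral_uIoc hAC hv' s t).trans
    (mul_le_mul hts ?_ (integral_nonneg fun _ => sq_nonneg _) ((abs_nonneg _).trans hts))
  refine setIntegral_mono_set ?_ (ae_of_all _ fun _ => sq_nonneg _) hwindow.eventuallyLE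
  exact ((memLp_two_iff_integrable_sq hv'.1).1 hv').integrableOn

end AbsolutelyContinuous

section SemiConvex

variable {E : Type*} [NormedAddCommGroup E] [InnerProductSpace ℝ E]

theorem convexOn_sub_mul_sq_norm_sub {W : E → ℝ} {lam : ℝ} (hW : ContDiff ℝ 2 W)
    (hHess : ∀ x v : E, lam * ‖v‖ ^ 2 ≤ iteratedFDeriv ℝ 2 W x ![v, v]) (c : E) :
    ConvexOn ℝ univ fun x => W x - lam / 2 * ‖x - c‖ ^ 2 := by
  have hW₁ : Differentiable ℝ W := hW.differentiable (by norm_num)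
  have hW₂ : Differentiable ℝ (fderiv ℝ W) :=
    (hW.fderiv_right (m := 1) (by norm_num)).differentiable one_ne_zero
  refine convexOn_univ_of_convexOn_add_smul fun x u => ?_
  have hline (t : ℝ) : HasDerivAt (fun t : ℝ => x + t • u - c) u t :=
    ((((hasDerivAt_id t).smul_const u).const_add x).sub_const c).congr_deriv (one_smul ℝ u)
  refine convexOn_of_hasDerivWithinAt2_nonneg convex_univ
    (f := fun t => W (x + t • u) - lam / 2 * ‖x + t • u - c‖ ^ 2)
    (f' := fun t => fderiv ℝ W (x + t • u) u - lam * inner ℝ (x + t • u - c) u)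
    (f'' := fun t => iteratedFDeriv ℝ 2 W (x + t • u) ![u, u] - lam * ‖u‖ ^ 2)
    (by have := hW₁.continuous; fun_prop) (fun t _ => ?_) (fun t _ => ?_) (fun t _ => ?_)
  · rw [interior_univ]
    refine HasDerivAt.hasDerivWithinAt ?_
    have hD : HasDerivAt (fun t : ℝ => W (x + t • u)) (fderiv ℝ W (x + t • u) u) t :=
      hasDerivAt_comp_add_smul (hW₁ _)
    exact (hD.sub (((hline t).norm_sq).const_mul (lam / 2))).congr_deriv (by ring)
  · rw [interior_univ]
    refine HasDerivAt.hasDerivWithinAt ?_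
    have hD : HasDerivAt (fun t : ℝ => fderiv ℝ W (x + t • u) u)
        (fderiv ℝ (fderiv ℝ W) (x + t • u) u u) t := by
      simpa using (hasDerivAt_comp_add_smul (hW₂ _)).clm_apply (hasDerivAt_const t u)
    refine (hD.sub (((hline t).inner ℝ (hasDerivAt_const t u)).const_mul lam)).congr_deriv ?_
    simp [iteratedFDeriv_two_apply]
  · exact sub_nonneg.2 (hHess (x + t • u) u)

theorem map_integral_le_of_convexOn_sub_mul_sq_norm_sub [CompleteSpace E] {α : Type*}
    [MeasurableSpace α] {μ : Measure α} [IsProbabilityMeasure μ] {W : E → ℝ} {lam : ℝ}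
    (hlam : lam ≤ 0) (hW : Continuous W) {c : E}
    (hconv : ConvexOn ℝ univ fun x => W x - lam / 2 * ‖x - c‖ ^ 2) {f : α → E}
    (hf : Integrable f μ) (hWf : Integrable (fun a => W (f a)) μ)
    (hfc : Integrable (fun a => ‖f a - c‖ ^ 2) μ) :
    W (∫ a, f a ∂μ) ≤ ∫ a, W (f a) ∂μ - lam / 2 * ∫ a, ‖f a - c‖ ^ 2 ∂μ := by
  have hJensen := hconv.map_integral_le (by fun_prop) isClosed_univ
    (ae_of_all _ fun _ => mem_univ _) hf (hWf.sub (hfc.const_mul _))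
  rw [integral_sub hWf (hfc.const_mul _), integral_const_mul] at hJensen
  have : 0 ≤ -lam / 2 * ‖∫ a, f a ∂μ - c‖ ^ 2 := by
    have := neg_nonneg.2 hlam; positivity
  linarith

theorem map_integral_smul_le_of_convexOn_sub_mul_sq_norm_sub [CompleteSpace E]
    {X : Type*} [TopologicalSpace X] [MeasurableSpace X] [OpensMeasurableSpace X]
    {μ : Measure X} [IsFiniteMeasureOnCompacts μ] {W : E → ℝ} {lam : ℝ} (hlam : lam ≤ 0)
    (hW : Continuous W) {c : E} (hconv : ConvexOn ℝ univ fun x => W x - lam / 2 * ‖x - c‖ ^ 2)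
    {w : X → ℝ} (hw : Continuous w) (hws : HasCompactSupport w) (hw₀ : 0 ≤ w)
    (hw₁ : ∫ a, w a ∂μ = 1) {f : X → E} (hf : Continuous f) {M : ℝ}
    (hM : ∀ a, w a ≠ 0 → ‖f a - c‖ ^ 2 ≤ M) :
    W (∫ a, w a • f a ∂μ) ≤ ∫ a, w a * W (f a) ∂μ - lam / 2 * M := by
  set ν := μ.withDensity fun a => ENNReal.ofReal (w a)
  have : IsProbabilityMeasure ν :=
    isProbabilityMeasure_withDensity_ofReal (hw.integrable_of_hasCompactSupport hws) hw₀ hw₁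
  have hfc : Continuous fun a => ‖f a - c‖ ^ 2 := by fun_prop
  have hJensen := map_integral_le_of_convexOn_sub_mul_sq_norm_sub hlam hW hconv
    (hf.integrable_withDensity_ofReal hw hws hw₀)
    ((hW.comp hf).integrable_withDensity_ofReal hw hws hw₀)
    (hfc.integrable_withDensity_ofReal (μ := μ) hw hws hw₀)
  have hM' : ∫ a, ‖f a - c‖ ^ 2 ∂ν ≤ M := by
    have hae : ∀ᵐ a ∂ν, ‖f a - c‖ ^ 2 ≤ M :=
      (ae_withDensity_iff (by fun_prop)).2 (ae_of_all _ fun a ha =>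
        hM a fun h => ha (by simp [h]))
    simpa using integral_mono_ae (hfc.integrable_withDensity_ofReal hw hws hw₀)
      (integrable_const M) hae
  simp only [ν, integral_withDensity_ofReal hw.measurable hw₀, smul_eq_mul] at hJensen hM'
  have : 0 ≤ -lam / 2 := by linarith
  linarith [mul_le_mul_of_nonneg_left hM' this]

end SemiConvex

theorem stmt14_general {n : ℕ} (lam : ℝ) (hlam : lam ≤ 0)
    (W : EuclideanSpace ℝ (Fin n) → ℝ) (hW : ContDiff ℝ 2 W)
    (hHess : ∀ x v : EuclideanSpace ℝ (Fin n),
      lam * ‖v‖ ^ 2 ≤ iteratedFDeriv ℝ 2 W x ![v, v])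
    (δ : ℝ) (hδ : 0 < δ)
    (ρ : ℝ → ℝ) (hρc : Continuous ρ) (hρ0 : ∀ t, 0 ≤ ρ t)
    (hρ1 : (∫ t, ρ t) = 1) (hρsupp : ∀ t, ρ t ≠ 0 → t ∈ Set.Icc (-δ) δ)
    (v v' : ℝ → EuclideanSpace ℝ (Fin n))
    (hAC : ∀ s t : ℝ, s ≤ t → v t - v s = ∫ u in s..t, v' u)
    (hv'2 : Integrable (fun t => ‖v' t‖ ^ 2) volume)
    (hint1 : Integrable (fun t => W (v t)) volume)
    (hint2 : Integrable (fun s => W (∫ t, ρ (s - t) • v t)) volume) :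
    (∫ s, W (∫ t, ρ (s - t) • v t)) ≤
      (∫ t, W (v t)) + 4 * δ ^ 2 * |lam| * ∫ t, ‖v' t‖ ^ 2 := by
  have hv' := hv'2.memLp_two_norm
  have hρcs : HasCompactSupport ρ :=
    HasCompactSupport.intro isCompact_Icc fun t ht => not_not.1 (mt (hρsupp t) ht)
  have hρi : Integrable ρ := hρc.integrable_of_hasCompactSupport hρcs
  have hpoint (s : ℝ) : W (∫ t, ρ (s - t) • v t) ≤ (∫ t, ρ (s - t) * W (v t)) -
      lam / 2 * (δ * ∫ u in Icc (s - δ) (s + δ), ‖v' u‖ ^ 2) := by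
    refine map_integral_smul_le_of_convexOn_sub_mul_sq_norm_sub hlam hW.continuous
      (convexOn_sub_mul_sq_norm_sub hW hHess (v s)) (w := fun t => ρ (s - t)) (by fun_prop)
      (hρcs.comp_homeomorph (Homeomorph.subLeft s)) (fun t => hρ0 _)
      (by rw [integral_sub_left_eq_self ρ volume s, hρ1])
      (continuous_of_forall_sub_eq_intervalIntegral hAC hv') fun t ht => ?_
    obtain ⟨h₁, h₂⟩ := hρsupp _ ht
    exact sq_norm_sub_le_mul_setIntegral_Icc hAC hv' (abs_le.2 ⟨by linarith, by linarith⟩)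
  calc ∫ s, W (∫ t, ρ (s - t) • v t)
      ≤ ∫ s, ((∫ t, ρ (s - t) * W (v t)) -
          lam / 2 * (δ * ∫ u in Icc (s - δ) (s + δ), ‖v' u‖ ^ 2)) :=
        integral_mono hint2 ((hρi.integrable_integral_mul_sub hint1).sub
          (((integrable_setIntegral_Icc_sub_add hv'2 δ).const_mul _).const_mul _)) hpoint
    _ = (∫ t, W (v t)) - lam / 2 * (δ * (2 * δ * ∫ t, ‖v' t‖ ^ 2)) := by
        rw [integral_sub (hρi.integrable_integral_mul_sub hint1)
            (((integrable_setIntegral_Icc_sub_add hv'2 δ).const_mul _).const_mul _),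
          integral_const_mul, integral_const_mul, integral_integral_mul_sub hρi hint1, hρ1,
          integral_setIntegral_Icc_sub_add hv'2 hδ.le, one_mul]
    _ ≤ (∫ t, W (v t)) + 4 * δ ^ 2 * |lam| * ∫ t, ‖v' t‖ ^ 2 := by
        rw [abs_of_nonpos hlam]
        have hK : 0 ≤ ∫ t, ‖v' t‖ ^ 2 := integral_nonneg fun t => sq_nonneg _
        nlinarith [mul_nonneg (mul_nonneg (neg_nonneg.2 hlam) (sq_nonneg δ)) hK]

/-- Convolution with a mollifier supported in `[−δ,δ]` increases the integral of a
`λ`-convex (`∇²W ≥ λ Id`, `λ ≤ 0`) potential `W` along an `H¹` curve by at most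
`4δ²|λ| ∫ |v'|²`. -/
theorem stmt14 {n : ℕ} (lam : ℝ) (hlam : lam ≤ 0)
    (W : EuclideanSpace ℝ (Fin n) → ℝ) (hW : ContDiff ℝ 2 W)
    (hHess : ∀ x v : EuclideanSpace ℝ (Fin n),
      lam * ‖v‖ ^ 2 ≤ iteratedFDeriv ℝ 2 W x ![v, v])
    (δ : ℝ) (hδ : 0 < δ)
    (ρ : ℝ → ℝ) (hρc : Continuous ρ) (hρ0 : ∀ t, 0 ≤ ρ t)
    (hρ1 : (∫ t, ρ t) = 1) (hρsupp : ∀ t, ρ t ≠ 0 → t ∈ Set.Icc (-δ) δ)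
    (v v' : ℝ → EuclideanSpace ℝ (Fin n))
    (hvloc : LocallyIntegrable v volume)
    (hAC : ∀ s t : ℝ, s ≤ t → v t - v s = ∫ u in s..t, v' u)
    (hv'2 : Integrable (fun t => ‖v' t‖ ^ 2) volume)
    (hint1 : Integrable (fun t => W (v t)) volume)
    (hint2 : Integrable (fun s => W (∫ t, ρ (s - t) • v t)) volume) :
    (∫ s, W (∫ t, ρ (s - t) • v t)) ≤
      (∫ t, W (v t)) + 4 * δ ^ 2 * |lam| * ∫ t, ‖v' t‖ ^ 2 :=
  stmt14_general lam hlam W hW hHess δ hδ ρ hρc hρ0 hρ1 hρsupp v v' hAC hv'2 hint1 hint2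
end
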